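/- arXiv:1810.06172 — 6 statements merged into one kernel-verified Lean document; each statement's English description precedes it below -/
import Mathlib

section
/- For all positive integers a and b, Φ(a, 2b) = exp(πi/4) · Φ(2b, −a). (This is the Landsberg–Schaar relation.) -/
open Complex Finset

/-- Normalized quadratic Gauss sum `Φ(a, b) = (1/√a) · Σ_{n=0}^{a−1} exp(πi n² b / a)`. -/
noncomputable def Phi (a b : ℤ) : ℂ :=
  ((Real.sqrt (a : ℝ) : ℝ) : ℂ)⁻¹ *
    ∑ n ∈ Finset.range a.toNat,
      Complex.exp (Real.pi * Complex.I * (n : ℂ) ^ 2 * (b : ℂ) / (a : ℂ))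

open Filter Topology
open scoped Real

/-!
Both sides are leading coefficients of Jacobi's theta function `θ(τ) = ∑ exp(πi n² τ)` at
rational cusps. When `pq` is even, `exp(πi n² p/q)` depends only on `n mod q`, and Poisson summation
over each residue class shows `(q w)^{1/2} θ(p/q + i w) → Φ(q, p)` as `Re(1/w) → ∞`.
Approach `p/q` vertically, `τ = p/q + iε` with `ε → 0⁺`: then `-1/τ` approaches the cusp `-q/p`,
and the modular relation `θ(-1/τ) = (-iτ)^{1/2} θ(τ)` makes the two normalized values differ
by exactly `(-i)^{1/2} = exp(-πi/4)`.
-/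

namespace Complex

lemma mul_cpow_of_re_pos {x y : ℂ} (hx : 0 < x.re) (hy : 0 < y.re) (s : ℂ) :
    (x * y) ^ s = x ^ s * y ^ s := by
  have hx0 : x ≠ 0 := fun h => by simp [h] at hx
  have hy0 : y ≠ 0 := fun h => by simp [h] at hy
  have hargx := abs_arg_lt_pi_div_two_iff.mpr (.inl hx)
  have hargy := abs_arg_lt_pi_div_two_iff.mpr (.inl hy)
  rw [cpow_def_of_ne_zero (mul_ne_zero hx0 hy0), cpow_def_of_ne_zero hx0, cpow_def_of_ne_zero hy0,
    log_mul hx0 hy0, add_mul, exp_add]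
  constructor <;> linarith [abs_lt.mp hargx, abs_lt.mp hargy]

end Complex

lemma Int.tsum_eq_sum_range_tsum_mul_add {R : Type*} [AddCommGroup R] [UniformSpace R]
    [IsUniformAddGroup R] [CompleteSpace R] [T0Space R] {f : ℤ → R} (hf : Summable f)
    (q : ℕ) [NeZero q] :
    ∑' n, f n = ∑ r ∈ Finset.range q, ∑' m : ℤ, f (m * q + r) := by
  let e : Fin q × ℤ ≃ ℤ := (Equiv.prodComm _ _).trans (Int.divModEquiv q).symm
  have hfe : Summable (fun p => f (e p)) := hf.comp_injective e.injective
  rw [← e.tsum_eq f, hfe.tsum_prod, tsum_fintype,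
    ← Fin.sum_univ_eq_sum_range (fun r => ∑' m : ℤ, f (m * q + r))]
  rfl

lemma tendsto_jacobiTheta₂_comap_im_atTop (z : ℂ) :
    Tendsto (jacobiTheta₂ z) (comap im atTop) (𝓝 1) := by
  have hlim : ∀ n : ℤ, Tendsto (fun τ => jacobiTheta₂_term n z τ) (comap im atTop)
      (𝓝 (if n = 0 then 1 else 0)) := by
    intro n
    split_ifs with hn
    · simpa [hn, jacobiTheta₂_term] using tendsto_const_nhds
    rw [tendsto_zero_iff_norm_tendsto_zero]
    simp only [norm_jacobiTheta₂_term]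
    have hn' : (n : ℝ) ≠ 0 := by exact_mod_cast hn
    have hneg : -π * (n : ℝ) ^ 2 < 0 := by
      rw [neg_mul, neg_lt_zero]
      positivity
    refine Real.tendsto_exp_atBot.comp ?_
    exact (tendsto_comap.const_mul_atTop_of_neg hneg).atBot_add
      (tendsto_const_nhds (x := -(2 * π * n * z.im))) |>.congr fun τ => by ring
  have := tendsto_tsum_of_dominated_convergence
    (summable_pow_mul_jacobiTheta₂_term_bound |z.im| one_pos 0) hlim ?_
  · rwa [tsum_ite_eq] at this
  · filter_upwards [tendsto_comap.eventually_ge_atTop 1] with τ hτ n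
    simpa using norm_jacobiTheta₂_term_le one_pos le_rfl hτ n

lemma cpow_mul_tsum_exp_neg_mul_add_sq {c : ℂ} (hc : c ≠ 0) (x : ℂ) :
    c ^ (1 / 2 : ℂ) * ∑' m : ℤ, cexp (-π * c * (m + x) ^ 2) = jacobiTheta₂ x (I / c) := by
  -- Poisson summation, in the form of the functional equation of `jacobiTheta₂` at `τ = I * c`
  have hIc : I * c ≠ 0 := mul_ne_zero I_ne_zero hc
  have hterm (m : ℤ) : cexp (-π * c * (m + x) ^ 2) =
      cexp (-π * c * x ^ 2) * jacobiTheta₂_term m (x * (I * c)) (I * c) := by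
    rw [jacobiTheta₂_term, ← exp_add]
    congr 1
    linear_combination (-(π * c * m ^ 2) - 2 * π * c * m * x) * I_sq
  have hfe := jacobiTheta₂_functional_equation (x * (I * c)) (I * c)
  have h1 : -I * (I * c) = c := by linear_combination -c * I_sq
  have h2 : -π * I * (x * (I * c)) ^ 2 / (I * c) = π * c * x ^ 2 := by
    rw [div_eq_iff hIc]
    linear_combination -π * I * x ^ 2 * c ^ 2 * I_sq
  have h3 : -1 / (I * c) = I / c := by field_simp; linear_combination -I_sq
  rw [h1, h2, h3, mul_div_cancel_right₀ _ hIc] at hfe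
  have hpow : c ^ (1 / 2 : ℂ) ≠ 0 := by simp [cpow_eq_zero_iff, hc]
  simp_rw [hterm, tsum_mul_left]
  have hexp : cexp (-π * c * x ^ 2) * cexp (π * c * x ^ 2) = 1 := by
    rw [← exp_add, neg_mul, neg_mul, neg_add_cancel, exp_zero]
  rw [← jacobiTheta₂, hfe]
  linear_combination (jacobiTheta₂ x (I / c)) * (hexp +
    cexp (-π * c * x ^ 2) * cexp (π * c * x ^ 2) * mul_inv_cancel₀ hpow)

lemma jacobiTheta_div_add_I_mul_eq_sum {q : ℕ} [NeZero q] {p : ℤ} (hpq : Even (p * q)) {w : ℂ}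
    (hw : 0 < w.re) :
    jacobiTheta (p / q + I * w) = ∑ r ∈ range q,
      cexp (π * I * r ^ 2 * p / q) * ∑' m : ℤ, cexp (-π * (q ^ 2 * w) * (m + r / q) ^ 2) := by
  obtain ⟨k, hk⟩ := hpq
  have hq : (q : ℂ) ≠ 0 := Nat.cast_ne_zero.mpr (NeZero.ne q)
  have hk' : (p : ℂ) * q = k + k := by exact_mod_cast hk
  have hsum : Summable fun n : ℤ => cexp (π * I * n ^ 2 * (p / q + I * w)) :=
    ((summable_jacobiTheta₂_term_iff 0 ((p : ℂ) / q + I * w)).mpr (by simpa using hw)).congr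
      fun n => by simp [jacobiTheta₂_term]
  rw [jacobiTheta, Int.tsum_eq_sum_range_tsum_mul_add hsum q]
  refine sum_congr rfl fun r _ => ?_
  rw [← tsum_mul_left]
  refine tsum_congr fun m => ?_
  -- `pq = 2k`, so the phase of `n = mq + r` differs from that of `r` by `2πi (k m² + p m r)`
  rw [← exp_add, ← mul_one (cexp (_ + _)), ← exp_int_mul_two_pi_mul_I (k * m ^ 2 + p * m * r),
    ← exp_add]
  congr 1
  push_cast
  field_simp
  linear_combination (I * m ^ 2 * q) * hk' + q * w * (m * q + r) ^ 2 * I_sq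

theorem tendsto_cpow_mul_jacobiTheta_div_add_I_mul {q : ℤ} (hq : 0 < q) {p : ℤ}
    (hpq : Even (p * q)) :
    Tendsto (fun w : ℂ => ((q : ℂ) * w) ^ (1 / 2 : ℂ) * jacobiTheta (p / q + I * w))
      (comap (fun w : ℂ => w⁻¹.re) atTop) (𝓝 (Phi q p)) := by
  lift q to ℕ using hq.le
  simp only [Int.cast_natCast]
  have : NeZero q := ⟨by exact_mod_cast hq.ne'⟩
  have hq₀ : (0 : ℝ) < q := by exact_mod_cast hq
  have hsqrt : (q : ℂ) ^ (1 / 2 : ℂ) = √(q : ℝ) := by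
    rw [← ofReal_natCast, show (1 / 2 : ℂ) = ((1 / 2 : ℝ) : ℂ) by push_cast; ring,
      ← ofReal_cpow hq₀.le, Real.sqrt_eq_rpow]
  have hsqrt₀ : (√(q : ℝ) : ℂ) ≠ 0 := by exact_mod_cast (Real.sqrt_pos.mpr hq₀).ne'
  have hPhi : Phi q p = (√(q : ℝ) : ℂ)⁻¹ * ∑ r ∈ range q, cexp (π * I * r ^ 2 * p / q) * 1 := by
    simp [Phi]
  have h_im : Tendsto (fun w : ℂ => I / (q ^ 2 * w)) (comap (fun w : ℂ => w⁻¹.re) atTop)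
      (comap im atTop) := by
    refine tendsto_comap_iff.mpr ?_
    have him (w : ℂ) : (I / (q ^ 2 * w)).im = ((q : ℝ) ^ 2)⁻¹ * w⁻¹.re := by
      rw [div_eq_mul_inv, I_mul_im, mul_inv, ← ofReal_natCast, ← ofReal_pow, ← ofReal_inv,
        re_ofReal_mul]
    simpa only [Function.comp_def, him] using tendsto_comap.const_mul_atTop (by positivity)
  rw [hPhi]
  refine Tendsto.congr' ?_ (tendsto_const_nhds.mul (tendsto_finsetSum _ fun r _ =>
    tendsto_const_nhds.mul ((tendsto_jacobiTheta₂_comap_im_atTop (r / q)).comp h_im)))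
  filter_upwards [tendsto_comap.eventually_gt_atTop 0] with w hw
  have hw' : 0 < w.re := by
    rw [inv_re] at hw
    exact (div_pos_iff.mp hw).resolve_right (fun h => (normSq_nonneg w).not_gt h.2) |>.1
  have hw₀ : w ≠ 0 := fun h => by simp [h] at hw'
  rw [jacobiTheta_div_add_I_mul_eq_sum hpq hw', mul_sum, mul_sum]
  refine sum_congr rfl fun r _ => ?_
  rw [Function.comp_apply, ← cpow_mul_tsum_exp_neg_mul_add_sq
    (mul_ne_zero (pow_ne_zero 2 (by exact_mod_cast hq₀.ne')) hw₀) (r / q : ℂ),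
    show (q : ℂ) ^ 2 * w = q * (q * w) by ring, mul_cpow_of_re_pos (by simpa using hq₀)
      (by simpa using mul_pos hq₀ hw'), hsqrt]
  field_simp

lemma jacobiTheta_neg_inv {τ : ℂ} (hτ : 0 < τ.im) :
    jacobiTheta (-τ⁻¹) = (-I * τ) ^ (1 / 2 : ℂ) * jacobiTheta τ := by
  have h := jacobiTheta_S_smul ⟨τ, hτ⟩
  rw [UpperHalfPlane.modular_S_smul] at h
  simpa [inv_neg] using h

lemma cpow_mul_inv_mul_jacobiTheta_neg_inv {c τ : ℂ} (hc : 0 < c.re) (hτ_re : 0 < τ.re)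
    (hτ_im : 0 < τ.im) :
    (c * τ⁻¹) ^ (1 / 2 : ℂ) * jacobiTheta (-τ⁻¹) =
      (-I) ^ (1 / 2 : ℂ) * (c ^ (1 / 2 : ℂ) * jacobiTheta τ) := by
  have hτ₀ : τ ≠ 0 := fun h => by simp [h] at hτ_im
  have hτ_inv : 0 < τ⁻¹.re := by
    rw [inv_re]
    exact div_pos hτ_re (normSq_pos.mpr hτ₀)
  have hI : τ⁻¹ ^ (1 / 2 : ℂ) * (-I * τ) ^ (1 / 2 : ℂ) = (-I) ^ (1 / 2 : ℂ) := by
    rw [← mul_cpow_of_re_pos hτ_inv (by simpa using hτ_im),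
      show τ⁻¹ * (-I * τ) = -I by field_simp]
  rw [mul_cpow_of_re_pos hc hτ_inv, jacobiTheta_neg_inv hτ_im]
  linear_combination (c ^ (1 / 2 : ℂ) * jacobiTheta τ) * hI

lemma tendsto_cpow_mul_jacobiTheta_vertical {q : ℤ} (hq : 0 < q) {p : ℤ} (hpq : Even (p * q)) :
    Tendsto (fun ε : ℝ => ((q : ℂ) * ε) ^ (1 / 2 : ℂ) * jacobiTheta (p / q + I * ε)) (𝓝[>] 0)
      (𝓝 (Phi q p)) :=
  (tendsto_cpow_mul_jacobiTheta_div_add_I_mul hq hpq).comp <| tendsto_comap_iff.mpr <| by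
    simpa [Function.comp_def, ← ofReal_inv] using tendsto_inv_nhdsGT_zero

lemma tendsto_neg_I_cpow_mul_cpow_mul_jacobiTheta_vertical {p q : ℤ} (hp : 0 < p) (hq : 0 < q)
    (hpq : Even (p * q)) :
    Tendsto (fun ε : ℝ =>
        (-I) ^ (1 / 2 : ℂ) * (((q : ℂ) * ε) ^ (1 / 2 : ℂ) * jacobiTheta (p / q + I * ε)))
      (𝓝[>] 0) (𝓝 (Phi p (-q))) := by
  have hp' : (0 : ℝ) < p := by exact_mod_cast hp
  have hq' : (0 : ℝ) < q := by exact_mod_cast hq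
  have hpC : (p : ℂ) ≠ 0 := by exact_mod_cast hp.ne'
  have hqC : (q : ℂ) ≠ 0 := by exact_mod_cast hq.ne'
  set τ : ℝ → ℂ := fun ε => p / q + I * ε with hτ
  -- chosen so that `-(τ ε)⁻¹ = -q / p + I * w ε`
  set w : ℝ → ℂ := fun ε => q * ε * (τ ε)⁻¹ / p with hw
  have hw_inv {ε : ℝ} (hε : ε ≠ 0) : (w ε)⁻¹ = ((p / q * ε⁻¹ : ℝ) : ℂ) * τ ε := by
    simp only [hw]
    push_cast
    field_simp
  have hw_re : Tendsto (fun ε => (w ε)⁻¹.re) (𝓝[>] 0) atTop := by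
    have hpq₀ : (0 : ℝ) < p / q := by positivity
    refine ((tendsto_inv_nhdsGT_zero.const_mul_atTop hpq₀).atTop_mul_const hpq₀).congr'
      (eventually_nhdsWithin_of_forall fun ε hε => ?_)
    show _ = (w ε)⁻¹.re
    rw [hw_inv (ne_of_gt hε), re_ofReal_mul]
    simp [hτ]
  refine ((tendsto_cpow_mul_jacobiTheta_div_add_I_mul hp (p := -q) (by simpa [mul_comm] using
    hpq.neg)).comp (tendsto_comap_iff.mpr hw_re)).congr' (eventually_nhdsWithin_of_forall ?_)
  intro ε (hε : 0 < ε)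
  have hτ₀ : τ ε ≠ 0 := fun h => by simpa [hτ, hε.ne'] using congrArg im h
  have h_arg : ((-q : ℤ) : ℂ) / p + I * w ε = -(τ ε)⁻¹ := by
    simp only [hw]
    field_simp
    simp only [hτ]
    push_cast
    field_simp
    ring
  have h_pre : (p : ℂ) * w ε = ((q : ℂ) * ε) * (τ ε)⁻¹ := by
    simp only [hw]
    field_simp
  simp only [Function.comp_apply]
  rw [h_arg, h_pre, cpow_mul_inv_mul_jacobiTheta_neg_inv (by simpa using mul_pos hq' hε)
    (by simpa [hτ] using div_pos hp' hq') (by simpa [hτ] using hε)]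

theorem Phi_eq_exp_mul_Phi_neg {p q : ℤ} (hp : 0 < p) (hq : 0 < q) (hpq : Even (p * q)) :
    Phi q p = cexp (π * I / 4) * Phi p (-q) := by
  have hI : (-I) ^ (1 / 2 : ℂ) = cexp (-(π * I / 4)) := by
    rw [cpow_def_of_ne_zero (neg_ne_zero.mpr I_ne_zero), log_neg_I]
    ring_nf
  rw [tendsto_nhds_unique (tendsto_neg_I_cpow_mul_cpow_mul_jacobiTheta_vertical hp hq hpq)
    ((tendsto_cpow_mul_jacobiTheta_vertical hq hpq).const_mul _), hI, ← mul_assoc, ← exp_add,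
    add_neg_cancel, exp_zero, one_mul]

/-- The Landsberg–Schaar relation: for positive integers `a`, `b`,
`Φ(a, 2b) = exp(πi/4) · Φ(2b, −a)`. -/
theorem landsberg_schaar (a b : ℤ) (ha : 0 < a) (hb : 0 < b) :
    Phi a (2 * b) = Complex.exp (Real.pi * Complex.I / 4) * Phi (2 * b) (-a) :=
  Phi_eq_exp_mul_Phi_neg (by positivity) ha ⟨b * a, by ring⟩
end

section
/- Let a and b be positive integers with gcd(a, b) = 1, and let l be any integer. Then Φ(ab, l) = Φ(a, bl) · Φ(b, al). -/
open Complex Finset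

/-! If `a b l` is even, `n ↦ exp (π i n² l / (a b))` is `a b`-periodic, so the sum may be taken
over the complete residue system `b x + a y` (`0 ≤ x < a`, `0 ≤ y < b`), where the phase factors as
`exp (π i x² b l / a) · exp (π i y² a l / b)`: the cross term `2 x y l` is a multiple of `2 π i`.
If `a b l` is odd, all three sums equal `1`: the phase changes sign under `n ↦ N - n`, so the terms
`1, …, N - 1` cancel in pairs. In both cases the normalizations match by `√(a b) = √a √b`. -/

section PeriodicSums

variable {M : Type*}

theorem sum_range_eq_apply_zero_of_apply_sub_eq_neg [AddCommGroup M] [IsAddTorsionFree M]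
    {f : ℤ → M} (N : ℕ) (hf : ∀ n, f (N - n) = -f n) :
    ∑ n ∈ range N, f n = f 0 := by
  have hreflect : ∑ n ∈ range (N + 1), f n = -∑ n ∈ range (N + 1), f n :=
    calc ∑ n ∈ range (N + 1), f n = ∑ n ∈ range (N + 1), f ↑(N + 1 - 1 - n) :=
          (sum_range_reflect _ _).symm
      _ = ∑ n ∈ range (N + 1), -f n := sum_congr rfl fun n hn => by
          rw [Nat.add_sub_cancel, Nat.cast_sub (mem_range_succ_iff.mp hn), hf]
      _ = -∑ n ∈ range (N + 1), f n := sum_neg_distrib _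
  have hN : f N = -f 0 := by simpa using hf 0
  rwa [self_eq_neg, sum_range_succ, hN, add_neg_eq_zero] at hreflect

theorem Function.Periodic.sum_range_mul_eq_sum_sum [AddCommMonoid M] {f : ℤ → M} {a b : ℕ}
    (hab : a.Coprime b) (hf : Function.Periodic f (a * b)) :
    ∑ n ∈ range (a * b), f n = ∑ x ∈ range a, ∑ y ∈ range b, f (b * x + a * y) := by
  set g : ℕ × ℕ → ℕ := fun p => (b * p.1 + a * p.2) % (a * b)
  have hmaps : ∀ p ∈ range a ×ˢ range b, g p ∈ range (a * b) := by
    intro p hp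
    simp only [mem_product, mem_range] at hp
    exact mem_range.mpr (Nat.mod_lt _ (Nat.mul_pos (by omega) (by omega)))
  have hinj : Set.InjOn g ↑(range a ×ˢ range b) := by
    rintro ⟨x, y⟩ hxy ⟨x', y'⟩ hxy' h
    simp only [coe_product, Set.mem_prod, mem_coe, mem_range] at hxy hxy'
    have hmod : b * x + a * y ≡ b * x' + a * y' [MOD a * b] := h
    have hx : x ≡ x' [MOD a] := by
      refine Nat.ModEq.cancel_left_of_coprime hab ?_
      simpa [Nat.ModEq, Nat.add_mod] using hmod.of_mul_right b
    have hy : y ≡ y' [MOD b] := by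
      refine Nat.ModEq.cancel_left_of_coprime hab.symm ?_
      simpa [Nat.ModEq, Nat.add_mod] using hmod.of_mul_left a
    exact Prod.ext (hx.eq_of_lt_of_lt hxy.1 hxy'.1) (hy.eq_of_lt_of_lt hxy.2 hxy'.2)
  rw [← sum_product']
  symm
  refine sum_nbij g hmaps hinj (surjOn_of_injOn_of_card_le _ hmaps hinj (by simp)) fun p _ => ?_
  have := hf.sub_zsmul_eq (x := (b * p.1 + a * p.2 : ℤ)) ((b * p.1 + a * p.2 : ℤ) / (a * b))
  rw [smul_eq_mul, mul_comm (_ / _), ← Int.emod_def] at this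
  simpa [g] using this.symm

end PeriodicSums

noncomputable def quadPhase (N l n : ℤ) : ℂ :=
  exp (Real.pi * I * n ^ 2 * l / N)

theorem Phi_natCast (N : ℕ) (l : ℤ) :
    Phi N l = (Real.sqrt N : ℂ)⁻¹ * ∑ n ∈ range N, quadPhase N l n := by
  simp [Phi, quadPhase]

@[simp]
theorem quadPhase_zero (N l : ℤ) : quadPhase N l 0 = 1 := by
  simp [quadPhase]

theorem quadPhase_periodic {N l : ℤ} (hN : N ≠ 0) (h : Even (N * l)) :
    Function.Periodic (quadPhase N l) N := by
  obtain ⟨s, hs⟩ := h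
  intro n
  refine exp_eq_exp_iff_exists_int.mpr ⟨n * l + s, ?_⟩
  have hsC : (N : ℂ) * l = s + s := by exact_mod_cast hs
  push_cast
  field_simp
  linear_combination (N : ℂ) * hsC

theorem quadPhase_self_sub_eq_neg {N l : ℤ} (h : Odd (N * l)) (n : ℤ) :
    quadPhase N l (N - n) = -quadPhase N l n := by
  have hN : (N : ℂ) ≠ 0 := by
    rintro hN
    simp [Int.cast_eq_zero.mp hN] at h
  obtain ⟨t, ht⟩ := h
  rw [quadPhase, quadPhase, ← exp_add_pi_mul_I]
  refine exp_eq_exp_iff_exists_int.mpr ⟨t - n * l, ?_⟩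
  have htC : (N : ℂ) * l = 2 * t + 1 := by exact_mod_cast ht
  push_cast
  field_simp
  linear_combination (N : ℂ) * htC

theorem quadPhase_mul_add_mul {a b : ℤ} (ha : a ≠ 0) (hb : b ≠ 0) (l x y : ℤ) :
    quadPhase (a * b) l (b * x + a * y) = quadPhase a (b * l) x * quadPhase b (a * l) y := by
  rw [quadPhase, quadPhase, quadPhase, ← exp_add]
  refine exp_eq_exp_iff_exists_int.mpr ⟨x * y * l, ?_⟩
  push_cast
  field_simp
  ring

theorem sum_range_quadPhase_of_odd {N : ℕ} {l : ℤ} (h : Odd (N * l)) :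
    ∑ n ∈ range N, quadPhase N l n = 1 := by
  rw [sum_range_eq_apply_zero_of_apply_sub_eq_neg N (quadPhase_self_sub_eq_neg h), quadPhase_zero]

/-- Multiplicativity of the Gauss sum: for coprime positive `a`, `b` and any `l`,
`Φ(ab, l) = Φ(a, bl) · Φ(b, al)`. -/
theorem phi_mul (a b l : ℤ) (ha : 0 < a) (hb : 0 < b) (hab : IsCoprime a b) :
    Phi (a * b) l = Phi a (b * l) * Phi b (a * l) := by
  lift a to ℕ using ha.le
  lift b to ℕ using hb.le
  have hsqrt : (Real.sqrt (a * b : ℕ) : ℂ)⁻¹ = (Real.sqrt a : ℂ)⁻¹ * (Real.sqrt b : ℂ)⁻¹ := by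
    rw [Nat.cast_mul, Real.sqrt_mul (Nat.cast_nonneg a), ofReal_mul, mul_inv]
  rw [← Nat.cast_mul, Phi_natCast, Phi_natCast, Phi_natCast, hsqrt]
  rcases Int.even_or_odd (a * b * l) with h | h
  · rw [Nat.cast_mul, (quadPhase_periodic (by positivity) h).sum_range_mul_eq_sum_sum
      (Nat.isCoprime_iff_coprime.mp hab)]
    simp_rw [quadPhase_mul_add_mul ha.ne' hb.ne', ← sum_mul_sum]
    ring
  · rw [sum_range_quadPhase_of_odd (N := a * b) (by convert h using 1; push_cast; ring),
      sum_range_quadPhase_of_odd (N := a) (by convert h using 1; ring),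
      sum_range_quadPhase_of_odd (N := b) (by convert h using 1; ring)]
    ring
end

section
/- Let p be a prime and l an integer with gcd(p, l) = 1. If p is an odd prime and k ≥ 1, then Φ(p^k, 2l) · Φ(p^k, −2l) = 1. If p = 2 and k ≥ 3, then Φ(2^k, 2l) · Φ(2^k, −2l) = 2. -/
open Complex Finset

namespace AddChar

variable {R R' : Type*} [CommRing R] [Fintype R] [DecidableEq R] [CommRing R'] [IsDomain R']
  {ψ : AddChar R R'}

theorem sum_mul_sum_neg_sq (hψ : ψ.IsPrimitive) (a : R) :
    (∑ x, ψ (a * x ^ 2)) * (∑ x, ψ (-a * x ^ 2)) =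
      Fintype.card R * ∑ h with 2 * a * h = 0, ψ (a * h ^ 2) := by
  calc (∑ x, ψ (a * x ^ 2)) * (∑ y, ψ (-a * y ^ 2))
      = ∑ y, ∑ h, ψ (a * h ^ 2) * ψ (y * (2 * a * h)) := by
        rw [sum_mul_sum, sum_comm]
        refine sum_congr rfl fun y _ => ?_
        rw [← Equiv.sum_comp (Equiv.addRight y)]
        refine sum_congr rfl fun h _ => ?_
        rw [← map_add_eq_mul, ← map_add_eq_mul, Equiv.coe_addRight]
        ring_nf
      _ = ∑ h, ψ (a * h ^ 2) * if 2 * a * h = 0 then (Fintype.card R : R') else 0 := by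
        rw [sum_comm]
        simp_rw [← mul_sum, sum_mulShift _ hψ, Nat.cast_ite, Nat.cast_zero]
      _ = _ := by
        rw [sum_filter, mul_sum]
        refine sum_congr rfl fun h _ => ?_
        split_ifs <;> ring

theorem sum_mul_sum_neg_sq_of_isUnit (hψ : ψ.IsPrimitive) {a : R} (h2 : IsUnit (2 : R))
    (ha : IsUnit a) :
    (∑ x, ψ (a * x ^ 2)) * (∑ x, ψ (-a * x ^ 2)) = Fintype.card R := by
  have hker : ({h | 2 * a * h = 0} : Finset R) = {0} := by
    ext h
    simp [(h2.mul ha).mul_right_eq_zero]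
  rw [sum_mul_sum_neg_sq hψ, hker]
  simp

end AddChar

namespace ZMod

theorem sum_eq_sum_range {N : ℕ} [NeZero N] {M : Type*} [AddCommMonoid M]
    (f : ZMod N → M) : ∑ x, f x = ∑ n ∈ range N, f n :=
  sum_nbij' val (↑) (fun x _ => mem_range.2 (val_lt x)) (fun _ _ => mem_univ _)
    (fun x _ => natCast_zmod_val x) (fun _ hn => val_cast_of_lt (mem_range.1 hn))
    (fun x _ => by rw [natCast_zmod_val])

theorem filter_two_mul_eq_zero (m : ℕ) [NeZero m] :
    ({h | 2 * h = 0} : Finset (ZMod (2 * m))) = {0, (m : ZMod (2 * m))} := by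
  ext h
  simp only [mem_filter, mem_univ, true_and, mem_insert, mem_singleton]
  constructor
  · intro h2
    have hdvd : 2 * m ∣ 2 * h.val := by
      rw [← natCast_eq_zero_iff, Nat.cast_mul, natCast_zmod_val]
      exact_mod_cast h2
    obtain ⟨c, hc⟩ := Nat.dvd_of_mul_dvd_mul_left two_pos hdvd
    have hc2 : c < 2 := by
      have := val_lt h
      rw [hc] at this
      exact Nat.lt_of_mul_lt_mul_left (this.trans_eq (mul_comm 2 m))
    rw [← natCast_zmod_val h, hc]
    interval_cases c <;> simp
  · rintro (rfl | rfl)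
    · simp
    · exact_mod_cast natCast_self (2 * m)

theorem sum_mul_sum_neg_sq_of_four_dvd {N : ℕ} [NeZero N] {R' : Type*} [CommRing R']
    [IsDomain R'] {ψ : AddChar (ZMod N) R'} (hψ : ψ.IsPrimitive) (hN : 4 ∣ N) {a : ZMod N}
    (ha : IsUnit a) :
    (∑ x, ψ (a * x ^ 2)) * (∑ x, ψ (-a * x ^ 2)) = 2 * N := by
  obtain ⟨m, rfl⟩ : ∃ m, N = 2 * (2 * m) := ⟨N / 4, by omega⟩
  have : NeZero (2 * m) := ⟨by have := NeZero.ne (2 * (2 * m)); omega⟩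
  have hhalf_ne : (0 : ZMod (2 * (2 * m))) ≠ ((2 * m : ℕ) : ZMod (2 * (2 * m))) := by
    rw [ne_comm, Ne, natCast_eq_zero_iff]
    intro h
    have := Nat.le_of_dvd (Nat.pos_of_neZero _) h
    have := NeZero.ne (2 * m)
    omega
  have hhalf_sq : ((2 * m : ℕ) : ZMod (2 * (2 * m))) ^ 2 = 0 := by
    rw [← Nat.cast_pow, natCast_eq_zero_iff]
    exact ⟨m, by ring⟩
  have hker : ({h | 2 * a * h = 0} : Finset (ZMod (2 * (2 * m)))) =
      ({h | 2 * h = 0} : Finset _) := by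
    simp_rw [mul_right_comm 2 a, ha.mul_left_eq_zero]
  rw [AddChar.sum_mul_sum_neg_sq hψ, hker, filter_two_mul_eq_zero, sum_pair hhalf_ne, hhalf_sq,
    card, zero_pow two_ne_zero, mul_zero, AddChar.map_zero_eq_one]
  push_cast
  ring

end ZMod

theorem Phi_natCast_two_mul (N : ℕ) [NeZero N] (l : ℤ) :
    Phi N (2 * l) = (√N : ℂ)⁻¹ * ∑ x : ZMod N, ZMod.stdAddChar ((l : ZMod N) * x ^ 2) := by
  rw [Phi, Int.toNat_natCast, Int.cast_natCast, ZMod.sum_eq_sum_range]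
  congr 1
  refine sum_congr rfl fun n _ => ?_
  rw [← Int.cast_natCast (R := ZMod N), ← Int.cast_pow, ← Int.cast_mul, ZMod.stdAddChar_coe]
  congr 1
  push_cast
  ring

theorem Phi_mul_Phi_neg (N : ℕ) [NeZero N] (l : ℤ) :
    Phi N (2 * l) * Phi N (-(2 * l)) = (N : ℂ)⁻¹ *
      ((∑ x : ZMod N, ZMod.stdAddChar ((l : ZMod N) * x ^ 2)) *
        ∑ x : ZMod N, ZMod.stdAddChar (-(l : ZMod N) * x ^ 2)) := by
  rw [← mul_neg, Phi_natCast_two_mul, Phi_natCast_two_mul, Int.cast_neg, mul_mul_mul_comm,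
    ← mul_inv, ← ofReal_mul, Real.mul_self_sqrt N.cast_nonneg, ofReal_natCast]

theorem phi_reflection_general (p : ℕ) (l : ℤ) (hl : Int.gcd (p : ℤ) l = 1) (k : ℕ) :
    (Odd p → 1 ≤ k →
      Phi ((p : ℤ) ^ k) (2 * l) * Phi ((p : ℤ) ^ k) (-(2 * l)) = 1) ∧
    (p = 2 → 3 ≤ k →
      Phi ((p : ℤ) ^ k) (2 * l) * Phi ((p : ℤ) ^ k) (-(2 * l)) = 2) := by
  have hl_unit : IsUnit (l : ZMod (p ^ k)) := by
    rw [ZMod.coe_int_isUnit_iff_isCoprime, Nat.cast_pow]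
    exact (Int.isCoprime_iff_gcd_eq_one.2 hl).pow_left
  rw [← Nat.cast_pow]
  refine ⟨fun hp_odd _ => ?_, fun hp2 hk => ?_⟩
  · have : NeZero (p ^ k) := ⟨pow_ne_zero _ hp_odd.pos.ne'⟩
    have h2_unit : IsUnit (2 : ZMod (p ^ k)) := by
      exact_mod_cast (ZMod.isUnit_iff_coprime 2 (p ^ k)).2 (Nat.coprime_two_left.2 hp_odd.pow)
    rw [Phi_mul_Phi_neg, AddChar.sum_mul_sum_neg_sq_of_isUnit (ZMod.isPrimitive_stdAddChar _)
      h2_unit hl_unit, ZMod.card]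
    exact inv_mul_cancel₀ (NeZero.ne _)
  · subst hp2
    have h4_dvd : 4 ∣ 2 ^ k := pow_dvd_pow 2 (by omega : 2 ≤ k)
    rw [Phi_mul_Phi_neg, ZMod.sum_mul_sum_neg_sq_of_four_dvd (ZMod.isPrimitive_stdAddChar _)
      h4_dvd hl_unit]
    field_simp

/-- Reflection: for `p` prime and `gcd(p, l) = 1`,
`Φ(p^k, 2l)·Φ(p^k, −2l)` equals `1` for odd `p` and `k ≥ 1`, and `2` for `p = 2`, `k ≥ 3`. -/
theorem phi_reflection (p : ℕ) (hp : p.Prime) (l : ℤ) (hl : Int.gcd (p : ℤ) l = 1) (k : ℕ) :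
    (Odd p → 1 ≤ k →
      Phi ((p : ℤ) ^ k) (2 * l) * Phi ((p : ℤ) ^ k) (-(2 * l)) = 1) ∧
    (p = 2 → 3 ≤ k →
      Phi ((p : ℤ) ^ k) (2 * l) * Phi ((p : ℤ) ^ k) (-(2 * l)) = 2) :=
  phi_reflection_general p l hl k
end

section
/- Let k be an odd integer and let i, j be nonnegative integers with j ≥ i + 3. If i is even, then the number of residue classes x modulo 2^j with x² ≡ 2^i·k (mod 2^j) equals 4·2^{i/2} if k ≡ 1 (mod 8) and equals 0 otherwise. If i is odd, then the number of residue classes x modulo 2^j with x² ≡ 2^i·k (mod 2^j) is 0. -/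
lemma zmod_eq_iff (N : ℕ) (a b : ℤ) : ((a : ZMod N) = (b : ZMod N)) ↔ (N:ℤ) ∣ b - a := by
  rw [ZMod.intCast_eq_intCast_iff, Int.modEq_iff_dvd]

lemma cast_val_int (n : ℕ) [NeZero n] (z : ZMod n) : ((z.val : ℤ) : ZMod n) = z := by
  push_cast [ZMod.natCast_val, ZMod.cast_id]
  rfl

lemma lemR (n : ℕ) (c : ℤ) :
    Nat.card {x : ZMod (2^(n+2)) // x^2 = ((4*c : ℤ) : ZMod (2^(n+2)))} =
    2 * Nat.card {z : ZMod (2^n) // z^2 = ((c : ℤ) : ZMod (2^n))} := by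
  have hn : NeZero (2^n) := ⟨by positivity⟩
  have hn2 : NeZero (2^(n+2)) := ⟨by positivity⟩
  let f : ({z : ZMod (2^n) // z^2 = ((c : ZMod (2^n)))} × Fin 2) →
      {x : ZMod (2^(n+2)) // x^2 = ((4*c : ℤ) : ZMod (2^(n+2)))} := fun p =>
    ⟨((2 * (p.1.1.val + 2^n * (p.2 : ℕ)) : ℤ) : ZMod (2^(n+2))), by
      obtain ⟨⟨z, hz⟩, b⟩ := p
      simp only []
      rw [← Int.cast_pow, zmod_eq_iff]
      rw [← cast_val_int (2^n) z, ← Int.cast_pow, zmod_eq_iff] at hz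
      obtain ⟨d, hd⟩ := hz
      refine ⟨d - 2*(z.val:ℤ)*((b:ℕ):ℤ) - 2^n*((b:ℕ):ℤ)^2, ?_⟩
      push_cast
      push_cast at hd
      linear_combination (4:ℤ) * hd⟩
  have hbij : Function.Bijective f := by
    constructor
    · rintro ⟨⟨z, hz⟩, b⟩ ⟨⟨z', hz'⟩, b'⟩ h
      simp only [f, Subtype.mk.injEq, zmod_eq_iff] at h
      have hP : (0:ℤ) < 2^n := by positivity
      have hzv : (z.val : ℤ) < 2^n := by exact_mod_cast ZMod.val_lt z
      have hzv' : (z'.val : ℤ) < 2^n := by exact_mod_cast ZMod.val_lt z'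
      have hz0 : (0:ℤ) ≤ z.val := Int.natCast_nonneg _
      have hz0' : (0:ℤ) ≤ z'.val := Int.natCast_nonneg _
      have hb : ((b:ℕ):ℤ) ≤ 1 := by exact_mod_cast Nat.lt_succ_iff.mp b.2
      have hb' : ((b':ℕ):ℤ) ≤ 1 := by exact_mod_cast Nat.lt_succ_iff.mp b'.2
      have hb0 : (0:ℤ) ≤ ((b:ℕ):ℤ) := Int.natCast_nonneg _
      have hb0' : (0:ℤ) ≤ ((b':ℕ):ℤ) := Int.natCast_nonneg _
      have hpb : (2:ℤ)^n * ((b:ℕ):ℤ) ≤ 2^n * 1 :=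
        mul_le_mul_of_nonneg_left hb (le_of_lt hP)
      have hpb' : (2:ℤ)^n * ((b':ℕ):ℤ) ≤ 2^n * 1 :=
        mul_le_mul_of_nonneg_left hb' (le_of_lt hP)
      have hpb0 : (0:ℤ) ≤ 2^n * ((b:ℕ):ℤ) := by positivity
      have hpb0' : (0:ℤ) ≤ 2^n * ((b':ℕ):ℤ) := by positivity
      set D : ℤ := 2 * ((z'.val:ℤ) + 2^n * ((b':ℕ):ℤ)) - 2 * ((z.val:ℤ) + 2^n * ((b:ℕ):ℤ)) with hD
      have hdvd : ((2^(n+2):ℕ):ℤ) ∣ D := h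
      have hNval : ((2^(n+2):ℕ):ℤ) = 4 * 2^n := by push_cast; ring
      have hDz : D = 0 := by
        rcases eq_or_ne D 0 with h0 | h0
        · exact h0
        · exfalso
          have h1 : ((2^(n+2):ℕ):ℤ) ≤ |D| :=
            Int.le_of_dvd (abs_pos.mpr h0) ((dvd_abs _ _).mpr hdvd)
          rw [hNval] at h1
          have h2 : |D| < 4 * 2^n := by
            rw [abs_lt]
            constructor <;> simp only [hD] <;> linarith
          linarith
      have hDz' : 2 * ((z'.val:ℤ) + 2^n*((b':ℕ):ℤ)) = 2 * ((z.val:ℤ) + 2^n*((b:ℕ):ℤ)) := by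
        rw [hD] at hDz; linarith [hDz]
      have hbb : (b:ℕ) = (b':ℕ) ∧ (z.val:ℤ) = z'.val := by
        have hc : (b:ℕ) = 0 ∨ (b:ℕ) = 1 := by omega
        have hc' : (b':ℕ) = 0 ∨ (b':ℕ) = 1 := by omega
        rcases hc with hbv | hbv <;> rcases hc' with hbv' | hbv'
        · refine ⟨by rw [hbv, hbv'], ?_⟩
          rw [hbv, hbv'] at hDz'; push_cast at hDz'; linarith
        · exfalso; rw [hbv, hbv'] at hDz'; push_cast at hDz'; linarith
        · exfalso; rw [hbv, hbv'] at hDz'; push_cast at hDz'; linarith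
        · refine ⟨by rw [hbv, hbv'], ?_⟩
          rw [hbv, hbv'] at hDz'; push_cast at hDz'; linarith
      obtain ⟨hbeq, hzeq⟩ := hbb
      have hzz : z = z' := by
        have : z.val = z'.val := by exact_mod_cast hzeq
        rw [← cast_val_int (2^n) z, ← cast_val_int (2^n) z', this]
      have hb2 : b = b' := Fin.ext hbeq
      simp [hzz, hb2]
    · rintro ⟨x, hx⟩
      have hx' : ((2^(n+2):ℕ):ℤ) ∣ 4*c - (x.val:ℤ)^2 := by
        rw [← cast_val_int _ x, ← Int.cast_pow, zmod_eq_iff] at hx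
        exact hx
      obtain ⟨s, hs⟩ := hx'
      have hveven : 2 ∣ x.val := by
        have h2 : (2:ℤ) ∣ (x.val:ℤ)^2 := by
          refine ⟨2*c - 2^(n+1)*s, ?_⟩
          push_cast at hs ⊢
          linear_combination -hs
        have h3 : (2:ℤ) ∣ (x.val:ℤ) := Int.prime_two.dvd_of_dvd_pow h2
        exact_mod_cast h3
      obtain ⟨a, ha⟩ := hveven
      have halt : a < 2^(n+1) := by
        have h1 := ZMod.val_lt x
        have h2 : (2:ℕ)^(n+2) = 2*2^(n+1) := by ring
        omega
      have hcond : ((a:ℤ):ZMod (2^n))^2 = ((c:ℤ) : ZMod (2^n)) := by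
        rw [← Int.cast_pow, zmod_eq_iff]
        rw [show ((2^n:ℕ):ℤ) = 2^n by push_cast; rfl]
        refine ⟨s, ?_⟩
        have hxa : (x.val:ℤ) = 2*a := by exact_mod_cast ha
        rw [hxa] at hs
        push_cast at hs
        have h4 : (4:ℤ)*(c - (a:ℤ)^2) = 4*(2^n*s) := by linear_combination hs
        exact mul_left_cancel₀ (by norm_num : (4:ℤ) ≠ 0) h4
      have hdivlt : a / 2^n < 2 := Nat.div_lt_of_lt_mul (by linarith [halt, (by ring : (2:ℕ)^(n+1) = 2^n*2)])
      refine ⟨⟨⟨((a:ℤ):ZMod (2^n)), hcond⟩, ⟨a / 2^n, hdivlt⟩⟩, ?_⟩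
      apply Subtype.ext
      simp only [f]
      have hza : ((a:ℤ):ZMod (2^n)) = ((a:ℕ):ZMod (2^n)) := by push_cast; rfl
      rw [hza, ZMod.val_natCast]
      have harith : (2 * (((a % 2^n : ℕ):ℤ) + 2^n * ((a / 2^n : ℕ):ℤ)) : ℤ) = ((x.val:ℕ):ℤ) := by
        have h5 : a % 2^n + 2^n * (a / 2^n) = a := Nat.mod_add_div a (2^n)
        have h6 : 2 * (a % 2^n + 2^n * (a / 2^n)) = x.val := by rw [h5, ha]
        push_cast [← h6]
        ring
      show (((2 * ((a % 2^n : ℕ) + 2^n * (a / 2^n : ℕ)) : ℤ)) : ZMod (2^(n+2))) = x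
      rw [show (2 * (((a % 2^n : ℕ):ℤ) + 2^n * ((a / 2^n : ℕ):ℤ)) : ℤ) = ((x.val:ℕ):ℤ) from harith]
      exact cast_val_int _ x
  have hcard := Nat.card_eq_of_bijective f hbij
  rw [Nat.card_prod] at hcard
  have h2 : Nat.card (Fin 2) = 2 := by simp
  rw [h2] at hcard
  omega

-- no solutions of x² = 2k mod 2^m for m ≥ 3, k odd
lemma odd_base (m : ℕ) (hm : 3 ≤ m) (k : ℤ) (hk : Odd k) :
    Nat.card {x : ZMod (2^m) // x^2 = ((2*k : ℤ) : ZMod (2^m))} = 0 := by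
  have : IsEmpty {x : ZMod (2^m) // x^2 = ((2*k : ℤ) : ZMod (2^m))} := by
    rw [isEmpty_subtype]
    intro x hx
    obtain ⟨l, hl⟩ := hk
    have hd : (2^3 : ℕ) ∣ 2^m := pow_dvd_pow 2 hm
    have h8 : ((2:ℕ)^3) = 8 := by norm_num
    rw [h8] at hd
    let π := ZMod.castHom hd (ZMod 8)
    have := congrArg π hx
    rw [map_pow, map_intCast] at this
    have hk8 : ((2*k : ℤ) : ZMod 8) = 4*((l:ℤ) : ZMod 8) + 2 := by
      rw [hl]; push_cast; ring
    rw [hk8] at this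
    revert this
    exact (by decide : ∀ y w : ZMod 8, ¬ (y^2 = 4*w + 2)) (π x) _
  exact Nat.card_of_isEmpty

-- no solutions of x² = k mod 2^m for m ≥ 3, k odd, k % 8 ≠ 1
lemma even_bad (m : ℕ) (hm : 3 ≤ m) (k : ℤ) (hk : Odd k) (h8 : k % 8 ≠ 1) :
    Nat.card {x : ZMod (2^m) // x^2 = ((k : ℤ) : ZMod (2^m))} = 0 := by
  have : IsEmpty {x : ZMod (2^m) // x^2 = ((k : ℤ) : ZMod (2^m))} := by
    rw [isEmpty_subtype]
    intro x hx
    obtain ⟨l, hl⟩ := hk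
    have hd : (2^3 : ℕ) ∣ 2^m := pow_dvd_pow 2 hm
    rw [(by norm_num : ((2:ℕ)^3) = 8)] at hd
    let π := ZMod.castHom hd (ZMod 8)
    have h1 := congrArg π hx
    rw [map_pow, map_intCast] at h1
    have hk8 : ((k : ℤ) : ZMod 8) = 2*((l:ℤ) : ZMod 8) + 1 := by
      rw [hl]; push_cast; ring
    rw [hk8] at h1
    have h2 : (2:ZMod 8)*((l:ℤ) : ZMod 8) + 1 = ((1:ℤ) : ZMod 8) :=
      (by decide : ∀ y w : ZMod 8, y^2 = 2*w + 1 → 2*w+1 = ((1:ℤ):ZMod 8)) (π x) _ h1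
    rw [hk8.symm] at h2
    rw [zmod_eq_iff] at h2
    obtain ⟨d, hd2⟩ := h2
    omega
  exact Nat.card_of_isEmpty

-- existence of square roots of k ≡ 1 mod 8
lemma exists_sqrt (k : ℤ) (h8 : k % 8 = 1) (s : ℕ) :
    ∃ y : ℤ, Odd y ∧ (2:ℤ)^(s+3) ∣ y^2 - k := by
  induction s with
  | zero =>
    refine ⟨1, odd_one, ?_⟩
    have : (8:ℤ) ∣ 1^2 - k := by omega
    rwa [(by norm_num : ((2:ℤ)^(0+3)) = 8)]
  | succ s ih =>
    obtain ⟨y, hy, d, hd⟩ := ih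
    rcases Int.even_or_odd d with he | ho
    · obtain ⟨e, he⟩ := he
      exact ⟨y, hy, e, by rw [hd, he]; ring⟩
    · obtain ⟨g, hg⟩ := hy.add_odd ho
      refine ⟨y + 2^(s+2), hy.add_even ⟨2^(s+1), by ring⟩, g + 2^s, ?_⟩
      linear_combination hd + (2:ℤ)^(s+3) * hg

lemma ne_helper (N : ℕ) (a b : ℤ) (h0 : b - a ≠ 0) (h1 : |b - a| < (N:ℤ)) :
    ((a : ZMod N) ≠ (b : ZMod N)) := by
  intro h
  rw [zmod_eq_iff] at h
  have := Int.le_of_dvd (abs_pos.mpr h0) ((dvd_abs _ _).mpr h)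
  linarith

lemma ker4 (s : ℕ) :
    Nat.card {u : ZMod (2^(s+3)) // u^2 = 1} = 4 := by
  have hn : NeZero (2^(s+3)) := ⟨by positivity⟩
  have hP : (0:ℤ) < 2^(s+2) := by positivity
  have hbig : (4:ℤ) ≤ 2^(s+2) := by
    calc (4:ℤ) = 2^2 := by norm_num
    _ ≤ 2^(s+2) := pow_le_pow_right₀ (by norm_num) (by omega)
  have hNc : ((2^(s+3):ℕ):ℤ) = 2*2^(s+2) := by push_cast; ring
  have hsq : ∀ a : ℤ, (((a : ZMod (2^(s+3))))^2 = 1) ↔ ((2^(s+3):ℕ):ℤ) ∣ 1 - a^2 := by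
    intro a
    rw [show (1 : ZMod (2^(s+3))) = ((1:ℤ) : ZMod (2^(s+3))) by norm_cast,
      ← Int.cast_pow, zmod_eq_iff]
  have hset : {u : ZMod (2^(s+3)) | u^2 = 1} =
      {((1:ℤ) : ZMod (2^(s+3))), ((-1:ℤ) : ZMod (2^(s+3))),
       ((2^(s+2)+1:ℤ) : ZMod (2^(s+3))), ((2^(s+2)-1:ℤ) : ZMod (2^(s+3)))} := by
    ext u
    simp only [Set.mem_setOf_eq, Set.mem_insert_iff, Set.mem_singleton_iff]
    constructor
    · intro hu
      have ha : ((u.val:ℤ) : ZMod (2^(s+3))) = u := cast_val_int _ u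
      set a : ℤ := (u.val : ℤ) with haa
      rw [← ha] at hu ⊢
      rw [hsq] at hu
      obtain ⟨t, ht⟩ := hu
      rw [hNc] at ht
      have hodd : Odd a := by
        have h1 : Odd (a^2) := ⟨-(2^(s+2)*t), by linarith⟩
        rcases Int.even_or_odd a with he | ho
        · exact absurd h1 (Int.not_odd_iff_even.mpr (Int.even_pow.mpr ⟨he, two_ne_zero⟩))
        · exact ho
      obtain ⟨b, hb⟩ := hodd
      have hdvd : b*(b+1) = 2^(s+1) * (-t) := by
        have h4 : (4:ℤ) * (b*(b+1)) = 4 * (2^(s+1) * (-t)) := by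
          linear_combination -ht - (a + 2*b + 1) * hb
        exact mul_left_cancel₀ (by norm_num : (4:ℤ) ≠ 0) h4
      rcases Int.even_or_odd b with hbe | hbo
      · -- b even, b+1 odd : 2^(s+1) ∣ b
        obtain ⟨w, hw⟩ := hbe.add_one
        have hcop : IsCoprime ((2:ℤ)^(s+1)) (b+1) :=
          IsCoprime.pow_left ⟨-w, 1, by rw [hw]; ring⟩
        obtain ⟨e, hee⟩ := hcop.dvd_of_dvd_mul_right ⟨-t, hdvd⟩
        rcases Int.even_or_odd e with hev | hod
        · obtain ⟨f, hf⟩ := hev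
          left
          rw [zmod_eq_iff, hNc]
          exact ⟨-f, by rw [hb, hee, hf]; ring⟩
        · obtain ⟨g, hg⟩ := hod
          right; right; left
          rw [zmod_eq_iff, hNc]
          exact ⟨-g, by rw [hb, hee, hg]; ring⟩
      · -- b odd, 2^(s+1) ∣ b+1
        obtain ⟨w, hw⟩ := hbo
        have hcop : IsCoprime ((2:ℤ)^(s+1)) b :=
          IsCoprime.pow_left ⟨-w, 1, by rw [hw]; ring⟩
        obtain ⟨e, hee⟩ := hcop.dvd_of_dvd_mul_left ⟨-t, hdvd⟩
        rcases Int.even_or_odd e with hev | hod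
        · obtain ⟨f, hf⟩ := hev
          right; left
          rw [zmod_eq_iff, hNc]
          exact ⟨-f, by rw [show a = 2*(b+1) - 1 by linarith [hb], hee, hf]; ring⟩
        · obtain ⟨g, hg⟩ := hod
          right; right; right
          rw [zmod_eq_iff, hNc]
          exact ⟨-g, by rw [show a = 2*(b+1) - 1 by linarith [hb], hee, hg]; ring⟩
    · intro hu
      rcases hu with hu | hu | hu | hu <;> rw [hu, hsq]
      · exact ⟨0, by ring⟩
      · exact ⟨0, by ring⟩
      · exact ⟨-2^(s+1) - 1, by rw [hNc]; ring⟩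
      · exact ⟨-2^(s+1) + 1, by rw [hNc]; ring⟩
  have d12 : ((1:ℤ) : ZMod (2^(s+3))) ≠ ((-1:ℤ) : ZMod (2^(s+3))) :=
    ne_helper _ _ _ (by intro h; linarith) (by rw [hNc, abs_lt]; constructor <;> linarith)
  have d13 : ((1:ℤ) : ZMod (2^(s+3))) ≠ ((2^(s+2)+1:ℤ) : ZMod (2^(s+3))) :=
    ne_helper _ _ _ (by intro h; linarith) (by rw [hNc, abs_lt]; constructor <;> linarith)
  have d14 : ((1:ℤ) : ZMod (2^(s+3))) ≠ ((2^(s+2)-1:ℤ) : ZMod (2^(s+3))) :=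
    ne_helper _ _ _ (by intro h; linarith) (by rw [hNc, abs_lt]; constructor <;> linarith)
  have d23 : ((-1:ℤ) : ZMod (2^(s+3))) ≠ ((2^(s+2)+1:ℤ) : ZMod (2^(s+3))) :=
    ne_helper _ _ _ (by intro h; linarith) (by rw [hNc, abs_lt]; constructor <;> linarith)
  have d24 : ((-1:ℤ) : ZMod (2^(s+3))) ≠ ((2^(s+2)-1:ℤ) : ZMod (2^(s+3))) :=
    ne_helper _ _ _ (by intro h; linarith) (by rw [hNc, abs_lt]; constructor <;> linarith)
  have d34 : ((2^(s+2)+1:ℤ) : ZMod (2^(s+3))) ≠ ((2^(s+2)-1:ℤ) : ZMod (2^(s+3))) :=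
    ne_helper _ _ _ (by intro h; linarith) (by rw [hNc, abs_lt]; constructor <;> linarith)
  have hcount : Nat.card {u : ZMod (2^(s+3)) // u^2 = 1} =
      Set.ncard {u : ZMod (2^(s+3)) | u^2 = 1} := (Nat.card_coe_set_eq _).symm
  rw [hcount, hset]
  rw [Set.ncard_insert_of_notMem (by simp only [Set.mem_insert_iff, Set.mem_singleton_iff]; push_neg; exact ⟨d12, d13, d14⟩) (Set.toFinite _)]
  rw [Set.ncard_insert_of_notMem (by simp only [Set.mem_insert_iff, Set.mem_singleton_iff]; push_neg; exact ⟨d23, d24⟩) (Set.toFinite _)]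
  rw [Set.ncard_pair d34]

lemma even_good (s : ℕ) (k : ℤ) (h8 : k % 8 = 1) :
    Nat.card {x : ZMod (2^(s+3)) // x^2 = ((k : ℤ) : ZMod (2^(s+3)))} = 4 := by
  obtain ⟨y, hy, hdvd⟩ := exists_sqrt k h8 s
  have hn : NeZero (2^(s+3)) := ⟨by positivity⟩
  obtain ⟨w, hw⟩ := hy
  have hcop : IsCoprime ((2:ℤ)^(s+3)) y := IsCoprime.pow_left ⟨-w, 1, by rw [hw]; ring⟩
  obtain ⟨u, v, huv⟩ := hcop
  set y₀ : ZMod (2^(s+3)) := ((y:ℤ) : ZMod (2^(s+3))) with hy₀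
  set v₀ : ZMod (2^(s+3)) := ((v:ℤ) : ZMod (2^(s+3))) with hv₀
  have hinv2 : v₀ * y₀ = 1 := by
    have h1 : ((v*y : ℤ) : ZMod (2^(s+3))) = ((1:ℤ) : ZMod (2^(s+3))) := by
      rw [zmod_eq_iff]
      exact ⟨u, by push_cast; linarith [huv]⟩
    rwa [Int.cast_mul, Int.cast_one] at h1
  have hy₀sq : y₀^2 = ((k:ℤ) : ZMod (2^(s+3))) := by
    obtain ⟨d, hd⟩ := hdvd
    rw [hy₀, ← Int.cast_pow, zmod_eq_iff]
    exact ⟨-d, by push_cast; linarith [hd]⟩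
  let g : {a : ZMod (2^(s+3)) // a^2 = 1} →
      {x : ZMod (2^(s+3)) // x^2 = ((k:ℤ) : ZMod (2^(s+3)))} := fun p =>
    ⟨p.1 * y₀, by rw [mul_pow, p.2, one_mul, hy₀sq]⟩
  have hbij : Function.Bijective g := by
    constructor
    · rintro ⟨a, ha⟩ ⟨b, hb⟩ h
      simp only [g, Subtype.mk.injEq] at h
      apply Subtype.ext
      show a = b
      calc a = a * (y₀ * v₀) := by rw [mul_comm y₀ v₀, hinv2, mul_one]
      _ = (a * y₀) * v₀ := by ring
      _ = (b * y₀) * v₀ := by rw [h]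
      _ = b * (y₀ * v₀) := by ring
      _ = b := by rw [mul_comm y₀ v₀, hinv2, mul_one]
    · rintro ⟨x, hx⟩
      refine ⟨⟨x * v₀, ?_⟩, ?_⟩
      · calc (x*v₀)^2 = x^2 * v₀^2 := by ring
        _ = (v₀*y₀)^2 := by rw [hx, ← hy₀sq]; ring
        _ = 1 := by rw [hinv2]; norm_num
      · apply Subtype.ext
        show (x * v₀) * y₀ = x
        rw [mul_assoc, hinv2, mul_one]
  rw [← Nat.card_eq_of_bijective g hbij, ker4 s]

lemma lemI (t n : ℕ) (c : ℤ) :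
    Nat.card {x : ZMod (2^(n+2*t)) // x^2 = ((4^t * c : ℤ) : ZMod (2^(n+2*t)))} =
    2^t * Nat.card {z : ZMod (2^n) // z^2 = ((c : ℤ) : ZMod (2^n))} := by
  induction t with
  | zero => simp
  | succ t ih =>
    rw [show n + 2*(t+1) = (n+2*t)+2 by ring]
    rw [show ((4:ℤ)^(t+1) * c) = 4*(4^t*c) by ring]
    rw [lemR (n+2*t) (4^t*c), ih]
    ring

/-- Counting solutions of `x² ≡ 2^i·k (mod 2^j)` for odd `k` and `j ≥ i + 3`:
for even `i` there are `4·2^{i/2}` solutions if `k ≡ 1 (mod 8)` and none otherwise;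
for odd `i` there are no solutions. -/
theorem count_sq_cong_two (k : ℤ) (hk : Odd k) (i j : ℕ) (hij : i + 3 ≤ j) :
    (Even i →
      (k % 8 = 1 →
        Nat.card {x : ZMod (2 ^ j) // x ^ 2 = (((2 : ℤ) ^ i * k : ℤ) : ZMod (2 ^ j))} =
          4 * 2 ^ (i / 2)) ∧
      (k % 8 ≠ 1 →
        Nat.card {x : ZMod (2 ^ j) // x ^ 2 = (((2 : ℤ) ^ i * k : ℤ) : ZMod (2 ^ j))} = 0)) ∧
    (Odd i →
      Nat.card {x : ZMod (2 ^ j) // x ^ 2 = (((2 : ℤ) ^ i * k : ℤ) : ZMod (2 ^ j))} = 0) := by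
  constructor
  · rintro ⟨t, ht⟩
    obtain ⟨n, hn1, hn2⟩ : ∃ n, j = n + 2*t ∧ 3 ≤ n := ⟨j - 2*t, by omega, by omega⟩
    subst hn1
    have hpow : ((2:ℤ)^i * k) = 4^t * k := by
      rw [ht, show t + t = 2*t by omega, show (4:ℤ) = 2^2 by norm_num, ← pow_mul]
    constructor
    · intro h8
      obtain ⟨s, rfl⟩ : ∃ s, n = s + 3 := ⟨n - 3, by omega⟩
      rw [hpow, lemI t (s+3) k, even_good s k h8, show i/2 = t by omega]
      ring
    · intro h8
      obtain ⟨s, rfl⟩ : ∃ s, n = s + 3 := ⟨n - 3, by omega⟩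
      rw [hpow, lemI t (s+3) k, even_bad (s+3) (by omega) k hk h8, mul_zero]
  · rintro ⟨t, ht⟩
    obtain ⟨n, hn1, hn2⟩ : ∃ n, j = n + 2*t ∧ 3 ≤ n := ⟨j - 2*t, by omega, by omega⟩
    subst hn1
    have hpow : ((2:ℤ)^i * k) = 4^t * (2*k) := by
      rw [ht, show (4:ℤ) = 2^2 by norm_num, ← pow_mul]
      rw [show (2:ℤ)^(2*t+1) = 2^(2*t)*2 by ring]
      ring
    rw [hpow, lemI t n (2*k), odd_base n (by omega) k hk, mul_zero]
end

section
/- Let k ≥ 3 be an integer and let l be an odd integer. If k is odd, then Φ(2^k, 2l) = √2 · exp(πi l/4); if k is even, then Φ(2^k, 2l) = 1 + exp(πi l/2). -/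
/-!
With `ξ = exp (2πi l / N)` one has `Φ(N, 2l) = N^{-1/2} Σ_{n<N} ξ^{n²}`. For `N = 4M`, the even
`n = 2m` contribute twice the sum for `M` (with `ξ⁴` in place of `ξ`), by periodicity of `m ↦ m²`
modulo `M`. When moreover `4 ∣ M` the odd terms cancel in pairs `n`, `n + M`: the exponent changes
by `2M · (odd)` and `ξ^{2M} = exp (πi l) = -1`. Hence `Φ(4M, 2l) = Φ(M, 2l)`, which reduces
everything to `Φ(4, 2l)` and `Φ(8, 2l)`; there all odd squares are `1 mod 8`.
-/

open Complex Finset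

theorem Function.Periodic.sum_range_mul {M : Type*} [AddCommMonoid M] {f : ℕ → M} {p : ℕ}
    (hf : Function.Periodic f p) (c : ℕ) :
    ∑ n ∈ range (c * p), f n = c • ∑ n ∈ range p, f n := by
  induction c with
  | zero => simp
  | succ c ih =>
    rw [add_mul, one_mul, sum_range_add, ih, succ_nsmul]
    congr 1
    exact sum_congr rfl fun n _ => by rw [add_comm]; simpa using hf.nat_mul c n

theorem Function.Antiperiodic.sum_range_two_mul {G : Type*} [AddCommGroup G] {f : ℕ → G} {p : ℕ}
    (hf : Function.Antiperiodic f p) : ∑ n ∈ range (2 * p), f n = 0 := by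
  rw [two_mul, sum_range_add, ← sum_add_distrib]
  exact sum_eq_zero fun n _ => by rw [add_comm p n, hf n, add_neg_cancel]

theorem Finset.sum_range_two_mul {M : Type*} [AddCommMonoid M] (f : ℕ → M) (N : ℕ) :
    ∑ n ∈ range (2 * N), f n = ∑ m ∈ range N, f (2 * m) + ∑ m ∈ range N, f (2 * m + 1) := by
  induction N with
  | zero => simp
  | succ N ih =>
    rw [mul_add_one, sum_range_succ, sum_range_succ, ih, sum_range_succ, sum_range_succ]
    abel

section QuadraticGaussSum

variable {R : Type*} [CommRing R] (ξ : R)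

def quadraticGaussSum (N : ℕ) : R := ∑ n ∈ range N, ξ ^ n ^ 2

@[simp]
theorem quadraticGaussSum_one : quadraticGaussSum ξ 1 = 1 := by
  simp [quadraticGaussSum]

variable {ξ}

theorem periodic_pow_sq {N : ℕ} (h : ξ ^ N = 1) : Function.Periodic (fun n : ℕ => ξ ^ n ^ 2) N :=
  fun n => by
    simp only
    rw [show (n + N) ^ 2 = n ^ 2 + N * (2 * n + N) by ring, pow_add, pow_mul, h, one_pow, mul_one]

theorem quadraticGaussSum_four_mul {M : ℕ} (h : ξ ^ (4 * M) = 1) :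
    quadraticGaussSum ξ (4 * M) =
      2 * quadraticGaussSum (ξ ^ 4) M + ∑ m ∈ range (2 * M), ξ ^ (2 * m + 1) ^ 2 := by
  have hξ4 : (ξ ^ 4) ^ M = 1 := by rw [← pow_mul, h]
  rw [quadraticGaussSum, show 4 * M = 2 * (2 * M) by ring, sum_range_two_mul]
  congr 1
  calc ∑ m ∈ range (2 * M), ξ ^ (2 * m) ^ 2
      = ∑ m ∈ range (2 * M), (ξ ^ 4) ^ m ^ 2 := sum_congr rfl fun m _ => by ring
    _ = 2 * quadraticGaussSum (ξ ^ 4) M := by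
      rw [(periodic_pow_sq hξ4).sum_range_mul, nsmul_eq_mul, Nat.cast_ofNat, quadraticGaussSum]

theorem sum_pow_odd_sq_of_pow_eight (h : ξ ^ 8 = 1) (K : ℕ) :
    ∑ m ∈ range K, ξ ^ (2 * m + 1) ^ 2 = K * ξ := by
  have hodd (m : ℕ) : ξ ^ (2 * m + 1) ^ 2 = ξ := by
    obtain ⟨q, hq⟩ := Nat.eight_dvd_sq_sub_one_of_odd (odd_two_mul_add_one m)
    have hsq : (2 * m + 1) ^ 2 = 8 * q + 1 := by
      rw [← hq, Nat.sub_add_cancel (Nat.one_le_pow _ _ (by omega))]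
    rw [hsq, pow_succ, pow_mul, h, one_pow, one_mul]
  simp [hodd]

theorem antiperiodic_pow_odd_sq {c : ℕ} (h : ξ ^ (8 * c) = -1) :
    Function.Antiperiodic (fun m : ℕ => ξ ^ (2 * m + 1) ^ 2) (2 * c) := fun m => by
  simp only
  rw [show (2 * (m + 2 * c) + 1) ^ 2 = (2 * m + 1) ^ 2 + 8 * c * (2 * (m + c) + 1) by ring,
    pow_add, pow_mul, h, (odd_two_mul_add_one _).neg_one_pow, mul_neg_one]

theorem quadraticGaussSum_sixteen_mul {c : ℕ} (h : ξ ^ (8 * c) = -1) :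
    quadraticGaussSum ξ (4 * (4 * c)) = 2 * quadraticGaussSum (ξ ^ 4) (4 * c) := by
  have hanti := antiperiodic_pow_odd_sq h
  have hper : ξ ^ (4 * (4 * c)) = 1 := by
    rw [show 4 * (4 * c) = 8 * c * 2 by ring, pow_mul, h, neg_one_sq]
  rw [quadraticGaussSum_four_mul hper, show 2 * (4 * c) = 2 * (2 * (2 * c)) by ring,
    hanti.periodic_two_mul.sum_range_mul, hanti.sum_range_two_mul, smul_zero, add_zero]

theorem quadraticGaussSum_four (h : ξ ^ 4 = 1) : quadraticGaussSum ξ 4 = 2 * (1 + ξ) := by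
  have h8 : ξ ^ 8 = 1 := by rw [show 8 = 4 * 2 by rfl, pow_mul, h, one_pow]
  rw [← mul_one 4, quadraticGaussSum_four_mul (by rwa [mul_one]), sum_pow_odd_sq_of_pow_eight h8,
    quadraticGaussSum_one]
  push_cast
  ring

theorem quadraticGaussSum_eight (h : ξ ^ 4 = -1) : quadraticGaussSum ξ 8 = 4 * ξ := by
  have h8 : ξ ^ 8 = 1 := by rw [show 8 = 4 * 2 by rfl, pow_mul, h, neg_one_sq]
  rw [show 8 = 4 * 2 by rfl, quadraticGaussSum_four_mul h8, sum_pow_odd_sq_of_pow_eight h8]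
  simp [quadraticGaussSum, sum_range_succ, h]

end QuadraticGaussSum

open scoped Real

theorem Complex.exp_div_natCast_mul_pow (x : ℂ) {a : ℕ} (ha : a ≠ 0) (M : ℕ) :
    exp (x / ((a * M : ℕ) : ℂ)) ^ a = exp (x / M) := by
  rw [← exp_nat_mul]
  congr 1
  push_cast
  field_simp

theorem Complex.exp_two_pi_I_mul_odd_div_two {l : ℤ} (hl : Odd l) :
    exp (2 * π * I * l / 2) = -1 := by
  rw [show 2 * π * I * l / 2 = l * (π * I) by ring, exp_int_mul, exp_pi_mul_I, hl.neg_one_zpow]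

theorem Phi_natCast_two_mul_s12 (N : ℕ) (l : ℤ) :
    Phi N (2 * l) = ((√N : ℝ) : ℂ)⁻¹ * quadraticGaussSum (exp (2 * π * I * l / N)) N := by
  rw [Phi, Int.toNat_natCast, quadraticGaussSum]
  push_cast
  congr 1
  refine sum_congr rfl fun n _ => ?_
  rw [← exp_nat_mul]
  congr 1
  push_cast
  ring

theorem Phi_four_mul {l : ℤ} (hl : Odd l) {M : ℕ} (hM : 4 ∣ M) :
    Phi (4 * M : ℕ) (2 * l) = Phi M (2 * l) := by
  obtain ⟨c, rfl⟩ := hM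
  rcases Nat.eq_zero_or_pos c with rfl | hc
  · simp [Phi]
  have hhalf : exp (2 * π * I * l / ((4 * (4 * c) : ℕ) : ℂ)) ^ (8 * c) = -1 := by
    rw [show 4 * (4 * c) = 8 * c * 2 by ring, exp_div_natCast_mul_pow _ (by positivity),
      Nat.cast_ofNat, exp_two_pi_I_mul_odd_div_two hl]
  rw [Phi_natCast_two_mul_s12, Phi_natCast_two_mul_s12, quadraticGaussSum_sixteen_mul hhalf,
    exp_div_natCast_mul_pow _ four_ne_zero,
    Nat.cast_mul, Real.sqrt_mul (by norm_num),
    show √((4 : ℕ) : ℝ) = 2 by norm_num [Real.sqrt_eq_iff_mul_self_eq]]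
  push_cast
  rw [mul_inv]
  ring

theorem Phi_four_pow_mul {l : ℤ} (hl : Odd l) (n : ℕ) {M : ℕ} (hM : 4 ∣ M) :
    Phi (4 ^ n * M : ℕ) (2 * l) = Phi M (2 * l) := by
  induction n with
  | zero => simp
  | succ n ih =>
    rw [pow_succ', mul_assoc, Phi_four_mul hl (dvd_mul_of_dvd_right hM _), ih]

theorem Phi_four (l : ℤ) : Phi 4 (2 * l) = 1 + exp (π * I * l / 2) := by
  have hξ : exp (2 * π * I * l / ((4 * 1 : ℕ) : ℂ)) ^ 4 = 1 := by
    rw [exp_div_natCast_mul_pow _ four_ne_zero, Nat.cast_one, div_one, mul_comm,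
      exp_int_mul_two_pi_mul_I]
  rw [show (4 : ℤ) = ((4 * 1 : ℕ) : ℤ) from rfl, Phi_natCast_two_mul_s12, quadraticGaussSum_four hξ,
    show √((4 * 1 : ℕ) : ℝ) = 2 by norm_num [Real.sqrt_eq_iff_mul_self_eq],
    show 2 * π * I * l / ((4 * 1 : ℕ) : ℂ) = π * I * l / 2 by push_cast; ring]
  push_cast
  ring

theorem Phi_eight {l : ℤ} (hl : Odd l) : Phi 8 (2 * l) = √2 * exp (π * I * l / 4) := by
  have hξ : exp (2 * π * I * l / ((4 * 2 : ℕ) : ℂ)) ^ 4 = -1 := by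
    rw [exp_div_natCast_mul_pow _ four_ne_zero, Nat.cast_ofNat, exp_two_pi_I_mul_odd_div_two hl]
  have h := Phi_natCast_two_mul_s12 (4 * 2) l
  rw [quadraticGaussSum_eight hξ] at h
  have hsqrt : (√((4 * 2 : ℕ) : ℝ))⁻¹ * 4 = √2 := by
    rw [Nat.cast_mul, Real.sqrt_mul (by norm_num), Nat.cast_ofNat, Nat.cast_ofNat,
      show √(4 : ℝ) = 2 by norm_num [Real.sqrt_eq_iff_mul_self_eq]]
    field_simp
    norm_num
  rw [show (8 : ℤ) = ((4 * 2 : ℕ) : ℤ) from rfl, h, ← mul_assoc, ← ofReal_ofNat, ← ofReal_inv,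
    ← ofReal_mul, hsqrt]
  congr 2
  push_cast
  ring

/-- Evaluation of `Φ(2^k, 2l)` for `k ≥ 3` and odd `l`. -/
theorem phi_two_eval (k : ℕ) (hk : 3 ≤ k) (l : ℤ) (hl : Odd l) :
    (Odd k → Phi (2 ^ k) (2 * l) =
      ((Real.sqrt 2 : ℝ) : ℂ) * Complex.exp (Real.pi * Complex.I * (l : ℂ) / 4)) ∧
    (Even k → Phi (2 ^ k) (2 * l) =
      1 + Complex.exp (Real.pi * Complex.I * (l : ℂ) / 2)) := by
  refine ⟨fun ⟨n, hn⟩ => ?_, fun ⟨n, hn⟩ => ?_⟩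
  · obtain ⟨j, rfl⟩ : ∃ j, n = j + 1 := ⟨n - 1, by omega⟩
    have h2k : (2 : ℤ) ^ k = (4 ^ j * 8 : ℕ) := by
      push_cast
      rw [hn, show (4 : ℤ) = 2 ^ 2 by norm_num, ← pow_mul]
      ring
    rw [h2k, Phi_four_pow_mul hl j (by norm_num), Nat.cast_ofNat, Phi_eight hl]
  · obtain ⟨j, rfl⟩ : ∃ j, n = j + 1 := ⟨n - 1, by omega⟩
    have h2k : (2 : ℤ) ^ k = (4 ^ j * 4 : ℕ) := by
      push_cast
      rw [hn, show (4 : ℤ) = 2 ^ 2 by norm_num, ← pow_mul]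
      ring
    rw [h2k, Phi_four_pow_mul hl j dvd_rfl, Nat.cast_ofNat, Phi_four l]
end

section
/- Let a and b be coprime positive integers. Then the number of pairs (s, t) of integers with 0 ≤ s ≤ b−1, 0 ≤ t ≤ a−1, and a·s + b·t > a·b equals (a−1)(b−1)/2. -/
/-!
Points of the rectangle with `s = 0` or `t = 0` never satisfy the inequality, so only the
`(a - 1)(b - 1)` interior points `0 < s < b`, `0 < t < a` count. By coprimality none of them lies
on the line `a s + b t = a b`, and the point reflection `(s, t) ↦ (b - s, a - t)` of the interior
exchanges the two sides of that line, so exactly half of the interior points lie above it.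
-/

open Finset

theorem Finset.two_mul_card_filter_eq_card_of_involution {α : Type*} (s : Finset α)
    (p : α → Prop) [DecidablePred p] (f : α → α) (hf : ∀ x ∈ s, f x ∈ s)
    (hff : ∀ x ∈ s, f (f x) = x) (hp : ∀ x ∈ s, p (f x) ↔ ¬ p x) :
    2 * #(s.filter p) = #s := by
  have hswap : #(s.filter p) = #(s.filter (¬ p ·)) := by
    apply card_nbij' f f <;> intro x hx <;> simp only [coe_filter, Set.mem_ofPred_eq] at hx ⊢
    · exact ⟨hf x hx.1, (hp x hx.1).not.mpr (not_not.mpr hx.2)⟩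
    · exact ⟨hf x hx.1, (hp x hx.1).mpr hx.2⟩
    · exact hff x hx.1
    · exact hff x hx.1
  rw [two_mul]
  nth_rw 2 [hswap]
  exact card_filter_add_card_filter_not p

theorem Nat.mul_add_mul_ne_mul_of_coprime {a b s : ℕ} (hab : a.Coprime b) (hs : 0 < s)
    (hsb : s < b) (t : ℕ) : a * s + b * t ≠ a * b := by
  intro h
  have hdvd : b ∣ a * s := (Nat.dvd_add_left (dvd_mul_right b t)).mp (h ▸ dvd_mul_left b a)
  exact absurd (Nat.le_of_dvd hs (hab.symm.dvd_of_dvd_mul_left hdvd)) (not_le.mpr hsb)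

theorem filter_range_prod_range_eq_filter_Ioo_prod_Ioo (a b : ℕ) :
    (range b ×ˢ range a).filter (fun st => a * b < a * st.1 + b * st.2) =
      (Ioo 0 b ×ˢ Ioo 0 a).filter (fun st => a * b < a * st.1 + b * st.2) := by
  ext ⟨s, t⟩
  simp only [mem_filter, mem_product, mem_range, mem_Ioo]
  constructor
  · rintro ⟨⟨hs, ht⟩, hlt⟩
    refine ⟨⟨⟨Nat.pos_of_ne_zero ?_, hs⟩, Nat.pos_of_ne_zero ?_, ht⟩, hlt⟩ <;>
      rintro rfl <;> nlinarith
  · rintro ⟨⟨⟨-, hs⟩, -, ht⟩, hlt⟩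
    exact ⟨⟨hs, ht⟩, hlt⟩

theorem two_mul_card_filter_Ioo_prod_Ioo {a b : ℕ} (hab : a.Coprime b) :
    2 * #((Ioo 0 b ×ˢ Ioo 0 a).filter (fun st => a * b < a * st.1 + b * st.2)) =
      (a - 1) * (b - 1) := by
  rw [two_mul_card_filter_eq_card_of_involution _ _ (fun st => (b - st.1, a - st.2))]
  · simp only [card_product, Nat.card_Ioo, Nat.sub_zero, Nat.mul_comm]
  all_goals rintro ⟨s, t⟩ hst; simp only [mem_product, mem_Ioo] at hst
  · simp only [mem_product, mem_Ioo]
    omega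
  · simp only [Prod.mk.injEq]
    omega
  · have hne := Nat.mul_add_mul_ne_mul_of_coprime hab hst.1.1 hst.1.2 t
    have hs : a * (b - s) + a * s = a * b := by rw [← Nat.mul_add, Nat.sub_add_cancel hst.1.2.le]
    have ht : b * (a - t) + b * t = a * b := by
      rw [← Nat.mul_add, Nat.sub_add_cancel hst.2.2.le, Nat.mul_comm]
    dsimp only
    omega

theorem sylvester_count_general (a b : ℕ) (hab : Nat.Coprime a b) :
    ((Finset.range b ×ˢ Finset.range a).filter
        (fun st => a * b < a * st.1 + b * st.2)).card = (a - 1) * (b - 1) / 2 := by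
  rw [filter_range_prod_range_eq_filter_Ioo_prod_Ioo]
  have := two_mul_card_filter_Ioo_prod_Ioo hab
  omega

/-- For coprime positive integers `a`, `b`, the number of pairs `(s, t)` with
`0 ≤ s ≤ b−1`, `0 ≤ t ≤ a−1` and `a·s + b·t > a·b` is `(a−1)(b−1)/2`. -/
theorem sylvester_count (a b : ℕ) (ha : 0 < a) (hb : 0 < b) (hab : Nat.Coprime a b) :
    ((Finset.range b ×ˢ Finset.range a).filter
        (fun st => a * b < a * st.1 + b * st.2)).card = (a - 1) * (b - 1) / 2 :=
  sylvester_count_general a b hab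
end
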